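/- Let (B,g_B) and (F,g_F) be semi-regular singular semi-Riemannian manifolds, f : B → ℝ smooth with df ∈ Ω¹_s(B), and let (M,g) = B ×_f F be the warped product (which is semi-regular) with Riemann curvature R. For smooth vector fields X, Y, Z : B → E_B and U, V, W, Q : F → E_F, with lifts denoted by tildes, the following mixed components of the Riemann curvature vanish identically on M: R(X̃,Ỹ,Z̃,Q̃) = 0, R(X̃,Ỹ,W̃,Q̃) = 0, and R(Ũ,Ṽ,Z̃,Q̃) = 0. -/

import Mathlib

noncomputable section

section Basic

variable {E : Type*} [NormedAddCommGroup E] [NormedSpace ℝ E]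

/-- The Lie bracket of two vector fields. -/
def lieB (X Y : E → E) : E → E :=
  fun p => fderiv ℝ Y p (X p) - fderiv ℝ X p (Y p)

/-- The Koszul form of a singular metric `g`. -/
def koszul (g : E → (E →L[ℝ] E →L[ℝ] ℝ)) (X Y Z : E → E) : E → ℝ :=
  fun p =>
    (1 / 2) * (fderiv ℝ (fun x => g x (Y x) (Z x)) p (X p)
      + fderiv ℝ (fun x => g x (Z x) (X x)) p (Y p)
      - fderiv ℝ (fun x => g x (X x) (Y x)) p (Z p)
      - g p (X p) (lieB Y Z p)
      + g p (Y p) (lieB Z X p)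
      + g p (Z p) (lieB X Y p))

/-- `g` is a singular (semi-Riemannian) metric on `M`: smooth and pointwise symmetric. -/
def IsSingularMetric (M : Set E) (g : E → (E →L[ℝ] E →L[ℝ] ℝ)) : Prop :=
  ContDiffOn ℝ (⊤ : ℕ∞) g M ∧ ∀ p ∈ M, ∀ u v : E, g p u v = g p v u

/-- `w` represents the 1-form `κ(X,Y,_)` at `p` via the metric `g`. -/
def KoszulWitness (M : Set E) (g : E → (E →L[ℝ] E →L[ℝ] ℝ)) (X Y : E → E)
    (p w : E) : Prop :=
  ∀ Z : E → E, ContDiffOn ℝ (⊤ : ℕ∞) Z M → koszul g X Y Z p = g p w (Z p)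

/-- `(M,g)` is radical-stationary. -/
def RadicalStationary (M : Set E) (g : E → (E →L[ℝ] E →L[ℝ] ℝ)) : Prop :=
  ∀ X Y : E → E, ContDiffOn ℝ (⊤ : ℕ∞) X M → ContDiffOn ℝ (⊤ : ℕ∞) Y M →
    ∀ p ∈ M, ∃ w : E, KoszulWitness M g X Y p w

/-- `(M,g)` is semi-regular: radical-stationary and every covariant contraction
`κ(X,Y,•)κ(Z,T,•)` is a (well-defined) smooth function on `M`. -/
def SemiRegular (M : Set E) (g : E → (E →L[ℝ] E →L[ℝ] ℝ)) : Prop :=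
  RadicalStationary M g ∧
  ∀ X Y Z T : E → E, ContDiffOn ℝ (⊤ : ℕ∞) X M → ContDiffOn ℝ (⊤ : ℕ∞) Y M →
    ContDiffOn ℝ (⊤ : ℕ∞) Z M → ContDiffOn ℝ (⊤ : ℕ∞) T M →
    ∃ k : E → ℝ, ContDiffOn ℝ (⊤ : ℕ∞) k M ∧
      ∀ p ∈ M, ∀ w₁ w₂ : E,
        KoszulWitness M g X Y p w₁ → KoszulWitness M g Z T p w₂ →
          k p = g p w₁ w₂

/-- The differential of `f` is radical-annihilator on `B`. -/
def DiffRadicalAnnihilator (B : Set E) (g : E → (E →L[ℝ] E →L[ℝ] ℝ))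
    (f : E → ℝ) : Prop :=
  ∀ p ∈ B, ∃ w : E, ∀ z : E, fderiv ℝ f p z = g p w z

/-- `df ∈ Ω¹_s(B)`: `df` is radical-annihilator and the 1-forms `Y ↦ (∇_X df)(Y)`,
`(∇_X df)(Y) := X(Y f) - κ(X,Y,•)(df)(•)`, are radical-annihilator. -/
def DiffInOmega1s (B : Set E) (g : E → (E →L[ℝ] E →L[ℝ] ℝ)) (f : E → ℝ) : Prop :=
  DiffRadicalAnnihilator B g f ∧
  ∀ X : E → E, ContDiffOn ℝ (⊤ : ℕ∞) X B → ∀ p ∈ B, ∃ w : E,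
    ∀ Y : E → E, ContDiffOn ℝ (⊤ : ℕ∞) Y B → ∀ w₁ w₂ : E,
      KoszulWitness B g X Y p w₁ → (∀ z : E, fderiv ℝ f p z = g p w₂ z) →
        fderiv ℝ (fun x => fderiv ℝ f x (Y x)) p (X p) - g p w₁ w₂ = g p w (Y p)

/-- The value of the Riemann curvature tensor
`R(X,Y,Z,T) = X κ(Y,Z,T) - Y κ(X,Z,T) - κ([X,Y],Z,T) + κ(X,Z,•)κ(Y,T,•) - κ(Y,Z,•)κ(X,T,•)`
at `p`, written using vectors `w₁, w₂, w₃, w₄` representing the 1-forms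
`κ(X,Z,_), κ(Y,T,_), κ(Y,Z,_), κ(X,T,_)` at `p`, so that the covariant contractions
are `g p w₁ w₂` and `g p w₃ w₄`. -/
def riemannExpr (g : E → (E →L[ℝ] E →L[ℝ] ℝ)) (X Y Z T : E → E) (p : E)
    (w₁ w₂ w₃ w₄ : E) : ℝ :=
  fderiv ℝ (koszul g Y Z T) p (X p) - fderiv ℝ (koszul g X Z T) p (Y p)
    - koszul g (lieB X Y) Z T p + g p w₁ w₂ - g p w₃ w₄

end Basic

section Warped

variable {E₁ E₂ : Type*} [NormedAddCommGroup E₁] [NormedSpace ℝ E₁]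
  [NormedAddCommGroup E₂] [NormedSpace ℝ E₂]

/-- Lift a bilinear form on `E₁` to `E₁ × E₂` (acting through the first factor). -/
def liftBilinFst (b : E₁ →L[ℝ] E₁ →L[ℝ] ℝ) :
    (E₁ × E₂) →L[ℝ] (E₁ × E₂) →L[ℝ] ℝ :=
  (((b.comp (ContinuousLinearMap.fst ℝ E₁ E₂)).flip).comp
    (ContinuousLinearMap.fst ℝ E₁ E₂)).flip

/-- Lift a bilinear form on `E₂` to `E₁ × E₂` (acting through the second factor). -/
def liftBilinSnd (b : E₂ →L[ℝ] E₂ →L[ℝ] ℝ) :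
    (E₁ × E₂) →L[ℝ] (E₁ × E₂) →L[ℝ] ℝ :=
  (((b.comp (ContinuousLinearMap.snd ℝ E₁ E₂)).flip).comp
    (ContinuousLinearMap.snd ℝ E₁ E₂)).flip

/-- The warped product metric `g = g_B + f² g_F` on `B × F ⊆ E₁ × E₂`:
`g (p,q) ((u₁,u₂),(v₁,v₂)) = g_B p u₁ v₁ + f(p)² * g_F q u₂ v₂`. -/
def warpedMetric (gB : E₁ → (E₁ →L[ℝ] E₁ →L[ℝ] ℝ))
    (gF : E₂ → (E₂ →L[ℝ] E₂ →L[ℝ] ℝ)) (f : E₁ → ℝ) :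
    (E₁ × E₂) → ((E₁ × E₂) →L[ℝ] (E₁ × E₂) →L[ℝ] ℝ) :=
  fun x => liftBilinFst (gB x.1) + (f x.1) ^ 2 • liftBilinSnd (gF x.2)

/-- The lift to `E₁ × E₂` of a vector field on the base. -/
def liftVecB (X : E₁ → E₁) : (E₁ × E₂) → (E₁ × E₂) := fun x => (X x.1, 0)

/-- The lift to `E₁ × E₂` of a vector field on the fiber. -/
def liftVecF (V : E₂ → E₂) : (E₁ × E₂) → (E₁ × E₂) := fun x => (0, V x.2)

end Warped

/-! The Koszul form of a metric that is symmetric near `p` is tensorial at `p`: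
`κ(X,Y,Z)(p) = Γ_p(X p, Y p, Z p) + g_p(D_{X p} Y, Z p)`, with `Γ` the Christoffel symbol of the
first kind. For the warped metric, `Γ` splits into the symbols of `g_B` and `g_F` plus terms
`f · df ⊗ g_F`, which gives `κ(X̃,Ỹ,Ṽ) = 0`, `κ(X̃,Ṽ,W̃) = f (Xf) g_F(V,W)` and
`κ(Ṽ,X̃,W̃) = f (Xf) g_F(W,V)`.

A covariant contraction is read off a witness by testing it against constant vector fields; the
fibre part of a witness is only seen through `f² g_F`, so one factor `f` is cancelled where
`f p ≠ 0`, and everything vanishes where `f p = 0`. With this: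
* `R(X̃,Ỹ,Z̃,Q̃)`: every term vanishes.
* `R(X̃,Ỹ,W̃,Q̃)`: the derivative terms reduce to `f (X(Yf) - Y(Xf) - [X,Y]f) g_F(W,Q) = 0`, and
  both contractions equal `(Xf)(Yf) g_F(Q,W)`.
* `R(Ũ,Ṽ,Z̃,Q̃)`: the derivative terms give `f (Zf) (U⟨Q,V⟩ - V⟨Q,U⟩ - ⟨Q,[U,V]⟩)`, which by
  metric compatibility and torsion-freeness of `κ_F` is `f (Zf) (κ_F(U,Q,V) - κ_F(V,Q,U))`; the
  contractions are `f (Zf) κ_F(V,Q,U)` and `f (Zf) κ_F(U,Q,V)`. -/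

open Filter Topology

section Koszul

variable {E : Type*} [NormedAddCommGroup E] [NormedSpace ℝ E]

theorem fderiv_clm_apply_apply {F G H : Type*} [NormedAddCommGroup F] [NormedSpace ℝ F]
    [NormedAddCommGroup G] [NormedSpace ℝ G] [NormedAddCommGroup H] [NormedSpace ℝ H]
    {c : E → F →L[ℝ] G →L[ℝ] H} {u : E → F} {v : E → G} {p : E}
    (hc : DifferentiableAt ℝ c p) (hu : DifferentiableAt ℝ u p) (hv : DifferentiableAt ℝ v p)
    (w : E) :
    fderiv ℝ (fun y => c y (u y) (v y)) p w
      = fderiv ℝ c p w (u p) (v p) + c p (fderiv ℝ u p w) (v p) + c p (u p) (fderiv ℝ v p w) := by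
  rw [fderiv_clm_apply (hc.clm_apply hu) hv, fderiv_clm_apply hc hu]
  simp only [add_apply, ContinuousLinearMap.coe_comp, Function.comp_apply,
    ContinuousLinearMap.flip_apply]
  abel

theorem fderiv_clm_apply_apply_const {F G H : Type*} [NormedAddCommGroup F] [NormedSpace ℝ F]
    [NormedAddCommGroup G] [NormedSpace ℝ G] [NormedAddCommGroup H] [NormedSpace ℝ H]
    {c : E → F →L[ℝ] G →L[ℝ] H} {p : E} (hc : DifferentiableAt ℝ c p) (a : F) (b : G) (w : E) :
    fderiv ℝ (fun y => c y a b) p w = fderiv ℝ c p w a b := by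
  simpa using fderiv_clm_apply_apply hc (differentiableAt_const a) (differentiableAt_const b) w

variable {g : E → (E →L[ℝ] E →L[ℝ] ℝ)} {X Y Z : E → E} {p : E}

def christoffel (g : E → (E →L[ℝ] E →L[ℝ] ℝ)) (p x y z : E) : ℝ :=
  (1 / 2) * (fderiv ℝ g p x y z + fderiv ℝ g p y z x - fderiv ℝ g p z x y)

theorem fderiv_apply_apply_comm (hsym : ∀ᶠ y in 𝓝 p, ∀ u v, g y u v = g y v u)
    (hg : DifferentiableAt ℝ g p) (w u v : E) : fderiv ℝ g p w u v = fderiv ℝ g p w v u := by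
  have hfun : (fun y => g y u v) =ᶠ[𝓝 p] fun y => g y v u := hsym.mono fun y hy => hy u v
  rw [← fderiv_clm_apply_apply_const hg, ← fderiv_clm_apply_apply_const hg, hfun.fderiv_eq]

theorem koszul_eq_christoffel_add (hsym : ∀ᶠ y in 𝓝 p, ∀ u v, g y u v = g y v u)
    (hg : DifferentiableAt ℝ g p) (hX : DifferentiableAt ℝ X p) (hY : DifferentiableAt ℝ Y p)
    (hZ : DifferentiableAt ℝ Z p) :
    koszul g X Y Z p = christoffel g p (X p) (Y p) (Z p) + g p (fderiv ℝ Y p (X p)) (Z p) := by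
  have hs : ∀ u v, g p u v = g p v u := hsym.self_of_nhds
  have hs' := fderiv_apply_apply_comm hsym hg
  simp only [koszul, christoffel, lieB, fderiv_clm_apply_apply hg hY hZ,
    fderiv_clm_apply_apply hg hZ hX, fderiv_clm_apply_apply hg hX hY, map_sub]
  rw [hs (X p) (fderiv ℝ Y p (Z p)), hs (X p) (fderiv ℝ Z p (Y p)), hs (Y p) (fderiv ℝ Z p (X p)),
    hs (Y p) (fderiv ℝ X p (Z p)), hs (Z p) (fderiv ℝ Y p (X p)), hs (Z p) (fderiv ℝ X p (Y p)),
    hs' (Y p) (Z p) (X p), hs' (Z p) (X p) (Y p)]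
  ring

theorem koszul_add_koszul_swap (hsym : ∀ᶠ y in 𝓝 p, ∀ u v, g y u v = g y v u) :
    koszul g X Y Z p + koszul g X Z Y p = fderiv ℝ (fun y => g y (Y y) (Z y)) p (X p) := by
  have swap : ∀ A C : E → E,
      (fun y => g y (A y) (C y)) =ᶠ[𝓝 p] fun y => g y (C y) (A y) :=
    fun A C => hsym.mono fun y hy => hy (A y) (C y)
  simp only [koszul, lieB, map_sub, (swap Z Y).fderiv_eq, (swap X Z).fderiv_eq,
    (swap Y X).fderiv_eq]
  ring

theorem koszul_sub_koszul_swap (hsym : ∀ᶠ y in 𝓝 p, ∀ u v, g y u v = g y v u) :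
    koszul g X Y Z p - koszul g Y X Z p = g p (Z p) (lieB X Y p) := by
  have swap : ∀ A C : E → E,
      (fun y => g y (A y) (C y)) =ᶠ[𝓝 p] fun y => g y (C y) (A y) :=
    fun A C => hsym.mono fun y hy => hy (A y) (C y)
  simp only [koszul, lieB, map_sub, (swap Z Y).fderiv_eq, (swap X Z).fderiv_eq,
    (swap Y X).fderiv_eq]
  ring

theorem ContDiffOn.differentiableAt_of_isOpen {G : Type*} [NormedAddCommGroup G]
    [NormedSpace ℝ G] {s : Set E} {φ : E → G} (h : ContDiffOn ℝ (⊤ : ℕ∞) φ s) (hs : IsOpen s)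
    (hp : p ∈ s) : DifferentiableAt ℝ φ p :=
  (h.contDiffAt (hs.mem_nhds hp)).differentiableAt (by simp)

theorem differentiableAt_lieB {n : WithTop ℕ∞} (hX : ContDiffAt ℝ n X p)
    (hY : ContDiffAt ℝ n Y p) (hn : 2 ≤ n) : DifferentiableAt ℝ (lieB X Y) p :=
  (hX.lieBracket_vectorField hY (m := 1) hn).differentiableAt one_ne_zero

theorem KoszulWitness.koszul_const {M : Set E} {w : E} (hw : KoszulWitness M g X Y p w) (z : E) :
    koszul g X Y (fun _ => z) p = g p w z :=
  hw _ contDiffOn_const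

end Koszul

section Warped

variable {E₁ E₂ : Type*} [NormedAddCommGroup E₁] [NormedSpace ℝ E₁]
  [NormedAddCommGroup E₂] [NormedSpace ℝ E₂]
  {gB : E₁ → (E₁ →L[ℝ] E₁ →L[ℝ] ℝ)} {gF : E₂ → (E₂ →L[ℝ] E₂ →L[ℝ] ℝ)} {f : E₁ → ℝ}
  {x : E₁ × E₂}

theorem DifferentiableAt.comp_fst {G : Type*} [NormedAddCommGroup G] [NormedSpace ℝ G]
    {φ : E₁ → G} (h : DifferentiableAt ℝ φ x.1) :
    DifferentiableAt ℝ (fun y : E₁ × E₂ => φ y.1) x :=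
  DifferentiableAt.comp (E := E₁ × E₂) x h differentiableAt_fst

theorem DifferentiableAt.comp_snd {G : Type*} [NormedAddCommGroup G] [NormedSpace ℝ G]
    {ψ : E₂ → G} (h : DifferentiableAt ℝ ψ x.2) :
    DifferentiableAt ℝ (fun y : E₁ × E₂ => ψ y.2) x :=
  DifferentiableAt.comp (E := E₁ × E₂) x h differentiableAt_snd

theorem fderiv_mul_fst_snd {φ : E₁ → ℝ} {ψ : E₂ → ℝ} (hφ : DifferentiableAt ℝ φ x.1)
    (hψ : DifferentiableAt ℝ ψ x.2) (v : E₁ × E₂) :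
    fderiv ℝ (fun y : E₁ × E₂ => φ y.1 * ψ y.2) x v
      = fderiv ℝ φ x.1 v.1 * ψ x.2 + φ x.1 * fderiv ℝ ψ x.2 v.2 := by
  rw [HasFDerivAt.fderiv (f := fun y : E₁ × E₂ => φ y.1 * ψ y.2)
    ((hφ.hasFDerivAt.comp x hasFDerivAt_fst).mul (hψ.hasFDerivAt.comp x hasFDerivAt_snd))]
  simp only [Function.comp_apply, add_apply, smul_apply, ContinuousLinearMap.comp_apply,
    ContinuousLinearMap.coe_snd', smul_eq_mul, ContinuousLinearMap.coe_fst']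
  ring

@[simp]
theorem warpedMetric_apply (x a b : E₁ × E₂) :
    warpedMetric gB gF f x a b = gB x.1 a.1 b.1 + f x.1 ^ 2 * gF x.2 a.2 b.2 := rfl

theorem differentiableAt_warpedMetric (hgB : DifferentiableAt ℝ gB x.1)
    (hgF : DifferentiableAt ℝ gF x.2) (hf : DifferentiableAt ℝ f x.1) :
    DifferentiableAt ℝ (warpedMetric gB gF f) x := by
  -- Only compositions are differentiated here: `flip` and scalar multiplication on iterated
  -- `→L` spaces run into instance diamonds.
  let precompFst := (ContinuousLinearMap.compL ℝ (E₁ × E₂) E₁ ℝ).flip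
    (ContinuousLinearMap.fst ℝ E₁ E₂)
  let precompSnd := (ContinuousLinearMap.compL ℝ (E₁ × E₂) E₂ ℝ).flip
    (ContinuousLinearMap.snd ℝ E₁ E₂)
  have heq : warpedMetric gB gF f = fun y =>
      precompFst.comp ((gB y.1).comp (ContinuousLinearMap.fst ℝ E₁ E₂))
      + (precompSnd.comp ((gF y.2).comp (ContinuousLinearMap.snd ℝ E₁ E₂))).comp
        (f y.1 ^ 2 • ContinuousLinearMap.id ℝ (E₁ × E₂)) := by
    refine funext fun y => ContinuousLinearMap.ext fun a => ContinuousLinearMap.ext fun b => ?_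
    simp [precompFst, precompSnd]
  have hB : DifferentiableAt ℝ
      (fun y : E₁ × E₂ => precompFst.comp ((gB y.1).comp (ContinuousLinearMap.fst ℝ E₁ E₂))) x :=
    (differentiableAt_const _).clm_comp
      ((hgB.comp_fst (G := E₁ →L[ℝ] E₁ →L[ℝ] ℝ)).clm_comp (differentiableAt_const _))
  have hF : DifferentiableAt ℝ
      (fun y : E₁ × E₂ => precompSnd.comp ((gF y.2).comp (ContinuousLinearMap.snd ℝ E₁ E₂))) x :=
    (differentiableAt_const _).clm_comp
      ((hgF.comp_snd (G := E₂ →L[ℝ] E₂ →L[ℝ] ℝ)).clm_comp (differentiableAt_const _))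
  have hs : DifferentiableAt ℝ
      (fun y : E₁ × E₂ => f y.1 ^ 2 • ContinuousLinearMap.id ℝ (E₁ × E₂)) x :=
    ((hf.comp_fst (E₂ := E₂)).pow 2).smul_const _
  rw [heq]
  exact hB.add (hF.clm_comp hs)

theorem fderiv_warpedMetric_apply (hgB : DifferentiableAt ℝ gB x.1)
    (hgF : DifferentiableAt ℝ gF x.2) (hf : DifferentiableAt ℝ f x.1) (v a b : E₁ × E₂) :
    fderiv ℝ (warpedMetric gB gF f) x v a b = fderiv ℝ gB x.1 v.1 a.1 b.1
      + 2 * f x.1 * fderiv ℝ f x.1 v.1 * gF x.2 a.2 b.2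
      + f x.1 ^ 2 * fderiv ℝ gF x.2 v.2 a.2 b.2 := by
  have hB : HasFDerivAt (fun y : E₁ × E₂ => gB y.1 a.1 b.1)
      ((fderiv ℝ (fun p => gB p a.1 b.1) x.1).comp (ContinuousLinearMap.fst ℝ E₁ E₂)) x :=
    ((hgB.clm_apply (differentiableAt_const a.1)).clm_apply
      (differentiableAt_const b.1)).hasFDerivAt.comp x hasFDerivAt_fst
  have hF : HasFDerivAt (fun y : E₁ × E₂ => gF y.2 a.2 b.2)
      ((fderiv ℝ (fun q => gF q a.2 b.2) x.2).comp (ContinuousLinearMap.snd ℝ E₁ E₂)) x :=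
    ((hgF.clm_apply (differentiableAt_const a.2)).clm_apply
      (differentiableAt_const b.2)).hasFDerivAt.comp x hasFDerivAt_snd
  have hf2 := (hf.hasFDerivAt.pow 2).comp x (hasFDerivAt_fst (p := x))
  rw [← fderiv_clm_apply_apply_const (differentiableAt_warpedMetric hgB hgF hf),
    HasFDerivAt.fderiv (f := fun y => warpedMetric gB gF f y a b) (hB.add (hf2.mul hF))]
  simp only [Function.comp_apply, liftBilinSnd, ContinuousLinearMap.coe_coe,
    ContinuousLinearMap.flip_apply, ContinuousLinearMap.comp_apply, ContinuousLinearMap.coe_snd',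
    Nat.add_one_sub_one, pow_one, nsmul_eq_mul, Nat.cast_ofNat, ContinuousLinearMap.smul_comp,
    add_apply, ContinuousLinearMap.coe_fst', fderiv_clm_apply_apply_const hgB, smul_apply,
    fderiv_clm_apply_apply_const hgF, smul_eq_mul]
  ring

theorem christoffel_warpedMetric (hgB : DifferentiableAt ℝ gB x.1)
    (hgF : DifferentiableAt ℝ gF x.2) (hf : DifferentiableAt ℝ f x.1) (v w z : E₁ × E₂) :
    christoffel (warpedMetric gB gF f) x v w z = christoffel gB x.1 v.1 w.1 z.1
      + f x.1 * (fderiv ℝ f x.1 v.1 * gF x.2 w.2 z.2 + fderiv ℝ f x.1 w.1 * gF x.2 z.2 v.2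
        - fderiv ℝ f x.1 z.1 * gF x.2 v.2 w.2)
      + f x.1 ^ 2 * christoffel gF x.2 v.2 w.2 z.2 := by
  simp only [christoffel, fderiv_warpedMetric_apply hgB hgF hf]
  ring

theorem warpedMetric_apply_eq_of_ne_zero (hgF : ∀ u v, gF x.2 u v = gF x.2 v u)
    (hf : f x.1 ≠ 0) {v w : E₁ × E₂} {c : ℝ} {a : E₂} {ℓ : E₂ → ℝ}
    (hv : ∀ z, warpedMetric gB gF f x v z = f x.1 * c * gF x.2 a z.2)
    (hw : ∀ u, warpedMetric gB gF f x w (0, u) = f x.1 * ℓ u) :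
    warpedMetric gB gF f x v w = c * ℓ a := by
  have hw' : f x.1 * gF x.2 w.2 a = ℓ a := by
    apply mul_left_cancel₀ hf
    simpa [pow_two, mul_assoc] using hw a
  rw [hv, hgF, ← hw']
  ring

theorem differentiableAt_liftVecB {A : E₁ → E₁} (hA : DifferentiableAt ℝ A x.1) :
    DifferentiableAt ℝ (liftVecB (E₂ := E₂) A) x :=
  hA.comp_fst.prodMk (differentiableAt_const 0)

theorem differentiableAt_liftVecF {V : E₂ → E₂} (hV : DifferentiableAt ℝ V x.2) :
    DifferentiableAt ℝ (liftVecF (E₁ := E₁) V) x :=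
  (differentiableAt_const 0).prodMk hV.comp_snd

theorem contDiffAt_liftVecB {n : WithTop ℕ∞} {A : E₁ → E₁} (hA : ContDiffAt ℝ n A x.1) :
    ContDiffAt ℝ n (liftVecB (E₂ := E₂) A) x :=
  (hA.comp x contDiffAt_fst).prodMk contDiffAt_const

theorem contDiffAt_liftVecF {n : WithTop ℕ∞} {V : E₂ → E₂} (hV : ContDiffAt ℝ n V x.2) :
    ContDiffAt ℝ n (liftVecF (E₁ := E₁) V) x :=
  contDiffAt_const.prodMk (hV.comp x contDiffAt_snd)

theorem fderiv_liftVecB {A : E₁ → E₁} (hA : DifferentiableAt ℝ A x.1) (v : E₁ × E₂) :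
    fderiv ℝ (liftVecB (E₂ := E₂) A) x v = (fderiv ℝ A x.1 v.1, 0) := by
  rw [HasFDerivAt.fderiv (f := liftVecB A)
    ((hA.hasFDerivAt.comp x hasFDerivAt_fst).prodMk (hasFDerivAt_const (0 : E₂) x))]
  rfl

theorem fderiv_liftVecF {V : E₂ → E₂} (hV : DifferentiableAt ℝ V x.2) (v : E₁ × E₂) :
    fderiv ℝ (liftVecF (E₁ := E₁) V) x v = (0, fderiv ℝ V x.2 v.2) := by
  rw [HasFDerivAt.fderiv (f := liftVecF V)
    ((hasFDerivAt_const (0 : E₁) x).prodMk (hV.hasFDerivAt.comp x hasFDerivAt_snd))]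
  rfl

theorem lieB_liftVecB_liftVecB {A C : E₁ → E₁} (hA : DifferentiableAt ℝ A x.1)
    (hC : DifferentiableAt ℝ C x.1) :
    lieB (liftVecB (E₂ := E₂) A) (liftVecB C) x = (lieB A C x.1, 0) := by
  simp [lieB, fderiv_liftVecB hA, fderiv_liftVecB hC, liftVecB]

theorem lieB_liftVecF_liftVecF {U V : E₂ → E₂} (hU : DifferentiableAt ℝ U x.2)
    (hV : DifferentiableAt ℝ V x.2) :
    lieB (liftVecF (E₁ := E₁) U) (liftVecF V) x = (0, lieB U V x.2) := by
  simp [lieB, fderiv_liftVecF hU, fderiv_liftVecF hV, liftVecF]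

structure WarpedRegularAt (gB : E₁ → (E₁ →L[ℝ] E₁ →L[ℝ] ℝ))
    (gF : E₂ → (E₂ →L[ℝ] E₂ →L[ℝ] ℝ)) (f : E₁ → ℝ) (x : E₁ × E₂) : Prop where
  eventually_symm :
    ∀ᶠ y in 𝓝 x, ∀ a b, warpedMetric gB gF f y a b = warpedMetric gB gF f y b a
  differentiableAt_gB : DifferentiableAt ℝ gB x.1
  differentiableAt_gF : DifferentiableAt ℝ gF x.2
  differentiableAt_f : DifferentiableAt ℝ f x.1

theorem warpedRegularAt_of_mem {B : Set E₁} {F : Set E₂} (hB : IsOpen B) (hF : IsOpen F)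
    (hgB : IsSingularMetric B gB) (hgF : IsSingularMetric F gF) (hf : ContDiffOn ℝ (⊤ : ℕ∞) f B)
    (hx : x ∈ B ×ˢ F) : WarpedRegularAt gB gF f x where
  eventually_symm := by
    filter_upwards [(hB.prod hF).mem_nhds hx] with y hy a b
    simp [hgB.2 _ hy.1 a.1, hgF.2 _ hy.2 a.2]
  differentiableAt_gB := hgB.1.differentiableAt_of_isOpen hB hx.1
  differentiableAt_gF := hgF.1.differentiableAt_of_isOpen hF hx.2
  differentiableAt_f := hf.differentiableAt_of_isOpen hB hx.1

namespace WarpedRegularAt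

variable {T Z : E₁ × E₂ → E₁ × E₂}

theorem koszul_liftVecB (h : WarpedRegularAt gB gF f x) {C : E₁ → E₁} (hT : DifferentiableAt ℝ T x)
    (hC : DifferentiableAt ℝ C x.1) (hZ : DifferentiableAt ℝ Z x) :
    koszul (warpedMetric gB gF f) T (liftVecB C) Z x
      = christoffel gB x.1 (T x).1 (C x.1) (Z x).1 + gB x.1 (fderiv ℝ C x.1 (T x).1) (Z x).1
        + f x.1 * fderiv ℝ f x.1 (C x.1) * gF x.2 (Z x).2 (T x).2 := by
  have hg := differentiableAt_warpedMetric h.differentiableAt_gB h.differentiableAt_gF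
    h.differentiableAt_f
  rw [koszul_eq_christoffel_add h.eventually_symm hg hT (differentiableAt_liftVecB hC) hZ,
    christoffel_warpedMetric h.differentiableAt_gB h.differentiableAt_gF h.differentiableAt_f,
    fderiv_liftVecB hC]
  simp only [christoffel, one_div, liftVecB, map_zero, zero_apply, mul_zero, zero_add, sub_zero,
    add_zero, sub_self, warpedMetric_apply]
  ring

theorem koszul_liftVecF (h : WarpedRegularAt gB gF f x) {V : E₂ → E₂}
    (hT : DifferentiableAt ℝ T x) (hV : DifferentiableAt ℝ V x.2) (hZ : DifferentiableAt ℝ Z x) :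
    koszul (warpedMetric gB gF f) T (liftVecF V) Z x
      = f x.1 * (fderiv ℝ f x.1 (T x).1 * gF x.2 (V x.2) (Z x).2
          - fderiv ℝ f x.1 (Z x).1 * gF x.2 (T x).2 (V x.2))
        + f x.1 ^ 2 * (christoffel gF x.2 (T x).2 (V x.2) (Z x).2
          + gF x.2 (fderiv ℝ V x.2 (T x).2) (Z x).2) := by
  have hg := differentiableAt_warpedMetric h.differentiableAt_gB h.differentiableAt_gF
    h.differentiableAt_f
  rw [koszul_eq_christoffel_add h.eventually_symm hg hT (differentiableAt_liftVecF hV) hZ,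
    christoffel_warpedMetric h.differentiableAt_gB h.differentiableAt_gF h.differentiableAt_f,
    fderiv_liftVecF hV]
  simp only [christoffel, one_div, liftVecF, map_zero, zero_apply, add_zero, sub_self, mul_zero,
    zero_mul, zero_add, warpedMetric_apply]
  ring

theorem koszul_liftVecB_eq_zero (h : WarpedRegularAt gB gF f x) {C : E₁ → E₁}
    (hT : DifferentiableAt ℝ T x) (hC : DifferentiableAt ℝ C x.1) (hZ : DifferentiableAt ℝ Z x)
    (hT₂ : (T x).2 = 0) (hZ₁ : (Z x).1 = 0) :
    koszul (warpedMetric gB gF f) T (liftVecB C) Z x = 0 := by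
  rw [h.koszul_liftVecB hT hC hZ]
  simp [christoffel, hT₂, hZ₁]

theorem koszul_liftVecF_of_horizontal (h : WarpedRegularAt gB gF f x) {V : E₂ → E₂}
    (hT : DifferentiableAt ℝ T x) (hV : DifferentiableAt ℝ V x.2) (hZ : DifferentiableAt ℝ Z x)
    (hT₂ : (T x).2 = 0) :
    koszul (warpedMetric gB gF f) T (liftVecF V) Z x
      = f x.1 * fderiv ℝ f x.1 (T x).1 * gF x.2 (V x.2) (Z x).2 := by
  rw [h.koszul_liftVecF hT hV hZ]
  simp only [hT₂, map_zero, zero_apply, mul_zero, sub_zero, christoffel, one_div, add_zero,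
    sub_self]
  ring

theorem koszul_liftVecB_of_vertical (h : WarpedRegularAt gB gF f x) {C : E₁ → E₁}
    (hT : DifferentiableAt ℝ T x) (hC : DifferentiableAt ℝ C x.1) (hZ : DifferentiableAt ℝ Z x)
    (hT₁ : (T x).1 = 0) :
    koszul (warpedMetric gB gF f) T (liftVecB C) Z x
      = f x.1 * fderiv ℝ f x.1 (C x.1) * gF x.2 (Z x).2 (T x).2 := by
  rw [h.koszul_liftVecB hT hC hZ]
  simp [christoffel, hT₁]

variable {M : Set (E₁ × E₂)} {w : E₁ × E₂}

theorem koszulWitness_liftVecB_liftVecB (h : WarpedRegularAt gB gF f x) {A C : E₁ → E₁}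
    (hA : DifferentiableAt ℝ A x.1) (hC : DifferentiableAt ℝ C x.1)
    (hw : KoszulWitness M (warpedMetric gB gF f) (liftVecB A) (liftVecB C) x w) (u : E₂) :
    warpedMetric gB gF f x w (0, u) = 0 := by
  rw [← hw.koszul_const]
  exact h.koszul_liftVecB_eq_zero (differentiableAt_liftVecB hA) hC (differentiableAt_const _)
    rfl rfl

theorem koszulWitness_liftVecB_liftVecF (h : WarpedRegularAt gB gF f x) {A : E₁ → E₁}
    {V : E₂ → E₂} (hA : DifferentiableAt ℝ A x.1) (hV : DifferentiableAt ℝ V x.2)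
    (hw : KoszulWitness M (warpedMetric gB gF f) (liftVecB A) (liftVecF V) x w) (z : E₁ × E₂) :
    warpedMetric gB gF f x w z = f x.1 * fderiv ℝ f x.1 (A x.1) * gF x.2 (V x.2) z.2 := by
  rw [← hw.koszul_const]
  exact h.koszul_liftVecF_of_horizontal (differentiableAt_liftVecB hA) hV
    (differentiableAt_const _) rfl

theorem koszulWitness_liftVecF_liftVecB (h : WarpedRegularAt gB gF f x) {C : E₁ → E₁}
    {U : E₂ → E₂} (hU : DifferentiableAt ℝ U x.2) (hC : DifferentiableAt ℝ C x.1)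
    (hw : KoszulWitness M (warpedMetric gB gF f) (liftVecF U) (liftVecB C) x w) (z : E₁ × E₂) :
    warpedMetric gB gF f x w z = f x.1 * fderiv ℝ f x.1 (C x.1) * gF x.2 z.2 (U x.2) := by
  rw [← hw.koszul_const]
  exact h.koszul_liftVecB_of_vertical (differentiableAt_liftVecF hU) hC
    (differentiableAt_const _) rfl

theorem koszulWitness_liftVecF_liftVecF (h : WarpedRegularAt gB gF f x) {U V : E₂ → E₂}
    (hU : DifferentiableAt ℝ U x.2) (hV : DifferentiableAt ℝ V x.2)
    (hw : KoszulWitness M (warpedMetric gB gF f) (liftVecF U) (liftVecF V) x w) (u : E₂) :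
    warpedMetric gB gF f x w (0, u)
      = f x.1 ^ 2 * (christoffel gF x.2 (U x.2) (V x.2) u + gF x.2 (fderiv ℝ V x.2 (U x.2)) u) := by
  rw [← hw.koszul_const, h.koszul_liftVecF (differentiableAt_liftVecF hU) hV
    (differentiableAt_const _)]
  simp [liftVecF]

end WarpedRegularAt

end Warped

section Curvature

variable {E₁ E₂ : Type*} [NormedAddCommGroup E₁] [NormedSpace ℝ E₁]
  [NormedAddCommGroup E₂] [NormedSpace ℝ E₂] {B : Set E₁} {F : Set E₂}
  {gB : E₁ → (E₁ →L[ℝ] E₁ →L[ℝ] ℝ)} {gF : E₂ → (E₂ →L[ℝ] E₂ →L[ℝ] ℝ)} {f : E₁ → ℝ}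
  {p : E₁} {q : E₂}

theorem fderiv_koszul_liftVecB_liftVecB_liftVecF (hB : IsOpen B) (hF : IsOpen F)
    (hgB : IsSingularMetric B gB) (hgF : IsSingularMetric F gF) (hf : ContDiffOn ℝ (⊤ : ℕ∞) f B)
    {A C : E₁ → E₁} {V : E₂ → E₂} (hA : ContDiffOn ℝ (⊤ : ℕ∞) A B)
    (hC : ContDiffOn ℝ (⊤ : ℕ∞) C B) (hV : ContDiffOn ℝ (⊤ : ℕ∞) V F) (hp : p ∈ B) (hq : q ∈ F) :
    fderiv ℝ (koszul (warpedMetric gB gF f) (liftVecB A) (liftVecB C) (liftVecF V)) (p, q) = 0 := by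
  have hzero : koszul (warpedMetric gB gF f) (liftVecB A) (liftVecB C) (liftVecF V)
      =ᶠ[𝓝 (p, q)] fun _ => 0 := by
    filter_upwards [(hB.prod hF).mem_nhds (Set.mk_mem_prod hp hq)] with y hy
    exact (warpedRegularAt_of_mem hB hF hgB hgF hf hy).koszul_liftVecB_eq_zero
      (differentiableAt_liftVecB (hA.differentiableAt_of_isOpen hB hy.1))
      (hC.differentiableAt_of_isOpen hB hy.1)
      (differentiableAt_liftVecF (hV.differentiableAt_of_isOpen hF hy.2)) rfl rfl
  rw [hzero.fderiv_eq, fderiv_const_apply]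

theorem fderiv_koszul_liftVecB_liftVecF_liftVecF (hB : IsOpen B) (hF : IsOpen F)
    (hgB : IsSingularMetric B gB) (hgF : IsSingularMetric F gF) (hf : ContDiffOn ℝ (⊤ : ℕ∞) f B)
    {A : E₁ → E₁} {W V : E₂ → E₂} (hA : ContDiffOn ℝ (⊤ : ℕ∞) A B)
    (hW : ContDiffOn ℝ (⊤ : ℕ∞) W F) (hV : ContDiffOn ℝ (⊤ : ℕ∞) V F) (hp : p ∈ B) (hq : q ∈ F)
    (v : E₁) :
    fderiv ℝ (koszul (warpedMetric gB gF f) (liftVecB A) (liftVecF W) (liftVecF V)) (p, q) (v, 0)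
      = (fderiv ℝ f p v * fderiv ℝ f p (A p)
        + f p * fderiv ℝ (fun p' => fderiv ℝ f p' (A p')) p v) * gF q (W q) (V q) := by
  have hev : koszul (warpedMetric gB gF f) (liftVecB A) (liftVecF W) (liftVecF V) =ᶠ[𝓝 (p, q)]
      fun y => f y.1 * fderiv ℝ f y.1 (A y.1) * gF y.2 (W y.2) (V y.2) := by
    filter_upwards [(hB.prod hF).mem_nhds (Set.mk_mem_prod hp hq)] with y hy
    exact (warpedRegularAt_of_mem hB hF hgB hgF hf hy).koszul_liftVecF_of_horizontal
      (differentiableAt_liftVecB (hA.differentiableAt_of_isOpen hB hy.1))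
      (hW.differentiableAt_of_isOpen hF hy.2)
      (differentiableAt_liftVecF (hV.differentiableAt_of_isOpen hF hy.2)) rfl
  have df := hf.differentiableAt_of_isOpen hB hp
  have dAf : DifferentiableAt ℝ (fun p' => fderiv ℝ f p' (A p')) p :=
    (((hf.contDiffAt (hB.mem_nhds hp)).fderiv_right (m := 1) (WithTop.coe_le_coe.2 le_top)
      ).differentiableAt one_ne_zero).clm_apply (hA.differentiableAt_of_isOpen hB hp)
  have dgF := (hgF.1.differentiableAt_of_isOpen hF hq).clm_apply
    (hW.differentiableAt_of_isOpen hF hq) |>.clm_apply (hV.differentiableAt_of_isOpen hF hq)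
  rw [hev.fderiv_eq, fderiv_mul_fst_snd (x := (p, q)) (φ := fun p' => f p' * fderiv ℝ f p' (A p'))
    (df.mul dAf) dgF, fderiv_fun_mul df dAf]
  simp only [add_apply, smul_apply, smul_eq_mul, map_zero, mul_zero, add_zero]
  ring

theorem fderiv_koszul_liftVecF_liftVecB_liftVecF (hB : IsOpen B) (hF : IsOpen F)
    (hgB : IsSingularMetric B gB) (hgF : IsSingularMetric F gF) (hf : ContDiffOn ℝ (⊤ : ℕ∞) f B)
    {C : E₁ → E₁} {U V : E₂ → E₂} (hU : ContDiffOn ℝ (⊤ : ℕ∞) U F)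
    (hC : ContDiffOn ℝ (⊤ : ℕ∞) C B) (hV : ContDiffOn ℝ (⊤ : ℕ∞) V F) (hp : p ∈ B) (hq : q ∈ F)
    (u : E₂) :
    fderiv ℝ (koszul (warpedMetric gB gF f) (liftVecF U) (liftVecB C) (liftVecF V)) (p, q) (0, u)
      = f p * fderiv ℝ f p (C p) * fderiv ℝ (fun q' => gF q' (V q') (U q')) q u := by
  have hev : koszul (warpedMetric gB gF f) (liftVecF U) (liftVecB C) (liftVecF V) =ᶠ[𝓝 (p, q)]
      fun y => f y.1 * fderiv ℝ f y.1 (C y.1) * gF y.2 (V y.2) (U y.2) := by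
    filter_upwards [(hB.prod hF).mem_nhds (Set.mk_mem_prod hp hq)] with y hy
    exact (warpedRegularAt_of_mem hB hF hgB hgF hf hy).koszul_liftVecB_of_vertical
      (differentiableAt_liftVecF (hU.differentiableAt_of_isOpen hF hy.2))
      (hC.differentiableAt_of_isOpen hB hy.1)
      (differentiableAt_liftVecF (hV.differentiableAt_of_isOpen hF hy.2)) rfl
  have dφ : DifferentiableAt ℝ (fun p' => f p' * fderiv ℝ f p' (C p')) p :=
    (hf.differentiableAt_of_isOpen hB hp).mul ((((hf.contDiffAt (hB.mem_nhds hp)).fderiv_right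
      (m := 1) (WithTop.coe_le_coe.2 le_top)).differentiableAt one_ne_zero).clm_apply
      (hC.differentiableAt_of_isOpen hB hp))
  have dgF := (hgF.1.differentiableAt_of_isOpen hF hq).clm_apply
    (hV.differentiableAt_of_isOpen hF hq) |>.clm_apply (hU.differentiableAt_of_isOpen hF hq)
  rw [hev.fderiv_eq,
    fderiv_mul_fst_snd (x := (p, q)) (φ := fun p' => f p' * fderiv ℝ f p' (C p')) dφ dgF]
  simp only [map_zero, zero_mul, zero_add]

theorem riemannExpr_liftVecB_liftVecB_liftVecB_liftVecF_eq_zero (hB : IsOpen B) (hF : IsOpen F)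
    (hgB : IsSingularMetric B gB) (hgF : IsSingularMetric F gF) (hf : ContDiffOn ℝ (⊤ : ℕ∞) f B)
    {X Y Z : E₁ → E₁} {Q : E₂ → E₂} (hX : ContDiffOn ℝ (⊤ : ℕ∞) X B)
    (hY : ContDiffOn ℝ (⊤ : ℕ∞) Y B) (hZ : ContDiffOn ℝ (⊤ : ℕ∞) Z B)
    (hQ : ContDiffOn ℝ (⊤ : ℕ∞) Q F) (hp : p ∈ B) (hq : q ∈ F) {w₁ w₂ w₃ w₄ : E₁ × E₂}
    (hw₁ : KoszulWitness (B ×ˢ F) (warpedMetric gB gF f) (liftVecB X) (liftVecB Z) (p, q) w₁)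
    (hw₂ : KoszulWitness (B ×ˢ F) (warpedMetric gB gF f) (liftVecB Y) (liftVecF Q) (p, q) w₂)
    (hw₃ : KoszulWitness (B ×ˢ F) (warpedMetric gB gF f) (liftVecB Y) (liftVecB Z) (p, q) w₃)
    (hw₄ : KoszulWitness (B ×ˢ F) (warpedMetric gB gF f) (liftVecB X) (liftVecF Q) (p, q) w₄) :
    riemannExpr (warpedMetric gB gF f) (liftVecB X) (liftVecB Y) (liftVecB Z) (liftVecF Q)
      (p, q) w₁ w₂ w₃ w₄ = 0 := by
  have reg := warpedRegularAt_of_mem hB hF hgB hgF hf (Set.mk_mem_prod hp hq)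
  have dX := hX.differentiableAt_of_isOpen hB hp
  have dY := hY.differentiableAt_of_isOpen hB hp
  have dZ := hZ.differentiableAt_of_isOpen hB hp
  have dQ := hQ.differentiableAt_of_isOpen hF hq
  have hbracket : koszul (warpedMetric gB gF f) (lieB (liftVecB X) (liftVecB Y)) (liftVecB Z)
      (liftVecF Q) (p, q) = 0 :=
    reg.koszul_liftVecB_eq_zero (differentiableAt_lieB
      (contDiffAt_liftVecB (hX.contDiffAt (hB.mem_nhds hp)))
      (contDiffAt_liftVecB (hY.contDiffAt (hB.mem_nhds hp))) (WithTop.coe_le_coe.2 le_top))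
      dZ (differentiableAt_liftVecF dQ) (by rw [lieB_liftVecB_liftVecB dX dY]) rfl
  have hcontract : ∀ {A C : E₁ → E₁} {v w : E₁ × E₂}, DifferentiableAt ℝ A p →
      DifferentiableAt ℝ C p →
      KoszulWitness (B ×ˢ F) (warpedMetric gB gF f) (liftVecB A) (liftVecB Z) (p, q) v →
      KoszulWitness (B ×ˢ F) (warpedMetric gB gF f) (liftVecB C) (liftVecF Q) (p, q) w →
      warpedMetric gB gF f (p, q) v w = 0 := by
    intro A C v w dA dC hv hw
    have hw' := reg.koszulWitness_liftVecB_liftVecF dC dQ hw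
    rw [reg.eventually_symm.self_of_nhds v]
    rcases eq_or_ne (f p) 0 with h0 | h0
    · simp [hw', h0]
    · rw [warpedMetric_apply_eq_of_ne_zero (hgF.2 q hq) h0 hw' (ℓ := fun _ => 0) fun u => by
        rw [mul_zero, reg.koszulWitness_liftVecB_liftVecB dA dZ hv], mul_zero]
  simp only [riemannExpr, hbracket, hcontract dX dY hw₁ hw₂, hcontract dY dX hw₃ hw₄,
    fderiv_koszul_liftVecB_liftVecB_liftVecF hB hF hgB hgF hf hX hZ hQ hp hq,
    fderiv_koszul_liftVecB_liftVecB_liftVecF hB hF hgB hgF hf hY hZ hQ hp hq]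
  simp

theorem riemannExpr_liftVecB_liftVecB_liftVecF_liftVecF_eq_zero (hB : IsOpen B) (hF : IsOpen F)
    (hgB : IsSingularMetric B gB) (hgF : IsSingularMetric F gF) (hf : ContDiffOn ℝ (⊤ : ℕ∞) f B)
    {X Y : E₁ → E₁} {W Q : E₂ → E₂} (hX : ContDiffOn ℝ (⊤ : ℕ∞) X B)
    (hY : ContDiffOn ℝ (⊤ : ℕ∞) Y B) (hW : ContDiffOn ℝ (⊤ : ℕ∞) W F)
    (hQ : ContDiffOn ℝ (⊤ : ℕ∞) Q F) (hp : p ∈ B) (hq : q ∈ F) {w₁ w₂ w₃ w₄ : E₁ × E₂}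
    (hw₁ : KoszulWitness (B ×ˢ F) (warpedMetric gB gF f) (liftVecB X) (liftVecF W) (p, q) w₁)
    (hw₂ : KoszulWitness (B ×ˢ F) (warpedMetric gB gF f) (liftVecB Y) (liftVecF Q) (p, q) w₂)
    (hw₃ : KoszulWitness (B ×ˢ F) (warpedMetric gB gF f) (liftVecB Y) (liftVecF W) (p, q) w₃)
    (hw₄ : KoszulWitness (B ×ˢ F) (warpedMetric gB gF f) (liftVecB X) (liftVecF Q) (p, q) w₄) :
    riemannExpr (warpedMetric gB gF f) (liftVecB X) (liftVecB Y) (liftVecF W) (liftVecF Q)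
      (p, q) w₁ w₂ w₃ w₄ = 0 := by
  have reg := warpedRegularAt_of_mem hB hF hgB hgF hf (Set.mk_mem_prod hp hq)
  have dX := hX.differentiableAt_of_isOpen hB hp
  have dY := hY.differentiableAt_of_isOpen hB hp
  have dW := hW.differentiableAt_of_isOpen hF hq
  have dQ := hQ.differentiableAt_of_isOpen hF hq
  have hbracket := reg.koszul_liftVecF_of_horizontal (differentiableAt_lieB
      (contDiffAt_liftVecB (hX.contDiffAt (hB.mem_nhds hp)))
      (contDiffAt_liftVecB (hY.contDiffAt (hB.mem_nhds hp))) (WithTop.coe_le_coe.2 le_top))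
      dW (differentiableAt_liftVecF dQ) (by rw [lieB_liftVecB_liftVecB dX dY])
  rw [lieB_liftVecB_liftVecB dX dY] at hbracket
  have hschwarz : fderiv ℝ f p (lieB X Y p) = fderiv ℝ (fun p' => fderiv ℝ f p' (Y p')) p (X p)
      - fderiv ℝ (fun p' => fderiv ℝ f p' (X p')) p (Y p) :=
    VectorField.fderiv_apply_lieBracket (hf.contDiffAt (hB.mem_nhds hp))
      (by rw [minSmoothness_of_isRCLikeNormedField]; exact WithTop.coe_le_coe.2 le_top) dY dX
  have hcontract : ∀ {A C : E₁ → E₁} {v w : E₁ × E₂}, DifferentiableAt ℝ A p →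
      DifferentiableAt ℝ C p →
      KoszulWitness (B ×ˢ F) (warpedMetric gB gF f) (liftVecB A) (liftVecF W) (p, q) v →
      KoszulWitness (B ×ˢ F) (warpedMetric gB gF f) (liftVecB C) (liftVecF Q) (p, q) w →
      warpedMetric gB gF f (p, q) v w
        = if f p = 0 then 0 else fderiv ℝ f p (A p) * fderiv ℝ f p (C p) * gF q (Q q) (W q) := by
    intro A C v w dA dC hv hw
    have hv' := reg.koszulWitness_liftVecB_liftVecF dA dW hv
    split_ifs with h0
    · simp [hv', h0]
    · rw [warpedMetric_apply_eq_of_ne_zero (hgF.2 q hq) h0 hv'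
        (ℓ := fun u => fderiv ℝ f p (C p) * gF q (Q q) u) fun u => by
          rw [reg.koszulWitness_liftVecB_liftVecF dC dQ hw, mul_assoc]]
      ring
  simp only [riemannExpr, liftVecB, liftVecF, hcontract dX dY hw₁ hw₂, hcontract dY dX hw₃ hw₄,
    fderiv_koszul_liftVecB_liftVecF_liftVecF hB hF hgB hgF hf hX hW hQ hp hq,
    fderiv_koszul_liftVecB_liftVecF_liftVecF hB hF hgB hgF hf hY hW hQ hp hq, hbracket, hschwarz]
  split_ifs <;> ring

theorem riemannExpr_liftVecF_liftVecF_liftVecB_liftVecF_eq_zero (hB : IsOpen B) (hF : IsOpen F)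
    (hgB : IsSingularMetric B gB) (hgF : IsSingularMetric F gF) (hf : ContDiffOn ℝ (⊤ : ℕ∞) f B)
    {Z : E₁ → E₁} {U V Q : E₂ → E₂} (hZ : ContDiffOn ℝ (⊤ : ℕ∞) Z B)
    (hU : ContDiffOn ℝ (⊤ : ℕ∞) U F) (hV : ContDiffOn ℝ (⊤ : ℕ∞) V F)
    (hQ : ContDiffOn ℝ (⊤ : ℕ∞) Q F) (hp : p ∈ B) (hq : q ∈ F) {w₁ w₂ w₃ w₄ : E₁ × E₂}
    (hw₁ : KoszulWitness (B ×ˢ F) (warpedMetric gB gF f) (liftVecF U) (liftVecB Z) (p, q) w₁)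
    (hw₂ : KoszulWitness (B ×ˢ F) (warpedMetric gB gF f) (liftVecF V) (liftVecF Q) (p, q) w₂)
    (hw₃ : KoszulWitness (B ×ˢ F) (warpedMetric gB gF f) (liftVecF V) (liftVecB Z) (p, q) w₃)
    (hw₄ : KoszulWitness (B ×ˢ F) (warpedMetric gB gF f) (liftVecF U) (liftVecF Q) (p, q) w₄) :
    riemannExpr (warpedMetric gB gF f) (liftVecF U) (liftVecF V) (liftVecB Z) (liftVecF Q)
      (p, q) w₁ w₂ w₃ w₄ = 0 := by
  have reg := warpedRegularAt_of_mem hB hF hgB hgF hf (Set.mk_mem_prod hp hq)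
  have dZ := hZ.differentiableAt_of_isOpen hB hp
  have dU := hU.differentiableAt_of_isOpen hF hq
  have dV := hV.differentiableAt_of_isOpen hF hq
  have dQ := hQ.differentiableAt_of_isOpen hF hq
  have hsymF : ∀ᶠ y in 𝓝 q, ∀ u v, gF y u v = gF y v u :=
    Filter.eventually_of_mem (hF.mem_nhds hq) hgF.2
  have hbracket := reg.koszul_liftVecB_of_vertical (differentiableAt_lieB
      (contDiffAt_liftVecF (hU.contDiffAt (hF.mem_nhds hq)))
      (contDiffAt_liftVecF (hV.contDiffAt (hF.mem_nhds hq))) (WithTop.coe_le_coe.2 le_top))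
      dZ (differentiableAt_liftVecF dQ) (by rw [lieB_liftVecF_liftVecF dU dV])
  rw [lieB_liftVecF_liftVecF dU dV] at hbracket
  have hcontract : ∀ {A C : E₂ → E₂} {v w : E₁ × E₂}, DifferentiableAt ℝ A q →
      DifferentiableAt ℝ C q →
      KoszulWitness (B ×ˢ F) (warpedMetric gB gF f) (liftVecF A) (liftVecB Z) (p, q) v →
      KoszulWitness (B ×ˢ F) (warpedMetric gB gF f) (liftVecF C) (liftVecF Q) (p, q) w →
      warpedMetric gB gF f (p, q) v w = fderiv ℝ f p (Z p) * (f p * koszul gF C Q A q) := by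
    intro A C v w dA dC hv hw
    have hv' := reg.koszulWitness_liftVecF_liftVecB dA dZ hv
    rcases eq_or_ne (f p) 0 with h0 | h0
    · simp [hv', h0]
    · rw [koszul_eq_christoffel_add hsymF reg.differentiableAt_gF dC dQ dA]
      refine warpedMetric_apply_eq_of_ne_zero (hgF.2 q hq) h0 (a := A q)
        (ℓ := fun u => f p * (christoffel gF q (C q) (Q q) u + gF q (fderiv ℝ Q q (C q)) u))
        (fun z => ?_) (fun u => ?_)
      · rw [hv', hgF.2 q hq]
      · rw [reg.koszulWitness_liftVecF_liftVecF dC dQ hw]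
        ring
  have hmetric₁ := koszul_add_koszul_swap (X := U) (Y := Q) (Z := V) hsymF
  have hmetric₂ := koszul_add_koszul_swap (X := V) (Y := Q) (Z := U) hsymF
  have htorsion := koszul_sub_koszul_swap (X := U) (Y := V) (Z := Q) hsymF
  simp only [riemannExpr, liftVecF, hcontract dU dV hw₁ hw₂, hcontract dV dU hw₃ hw₄, hbracket,
    fderiv_koszul_liftVecF_liftVecB_liftVecF hB hF hgB hgF hf hU hZ hQ hp hq,
    fderiv_koszul_liftVecF_liftVecB_liftVecF hB hF hgB hgF hf hV hZ hQ hp hq]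
  linear_combination (f p * fderiv ℝ f p (Z p)) * (hmetric₂ - hmetric₁ + htorsion)

end Curvature

theorem warpedProduct_riemann_mixed_vanish_general
    {E₁ E₂ : Type*} [NormedAddCommGroup E₁] [NormedSpace ℝ E₁]
    [NormedAddCommGroup E₂] [NormedSpace ℝ E₂]
    (B : Set E₁) (F : Set E₂) (hB : IsOpen B) (hF : IsOpen F)
    (gB : E₁ → (E₁ →L[ℝ] E₁ →L[ℝ] ℝ)) (gF : E₂ → (E₂ →L[ℝ] E₂ →L[ℝ] ℝ))
    (hgB : IsSingularMetric B gB) (hgF : IsSingularMetric F gF)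
    (f : E₁ → ℝ) (hf : ContDiffOn ℝ (⊤ : ℕ∞) f B)
    (X Y Z : E₁ → E₁) (U V W Q : E₂ → E₂)
    (hX : ContDiffOn ℝ (⊤ : ℕ∞) X B) (hY : ContDiffOn ℝ (⊤ : ℕ∞) Y B)
    (hZ : ContDiffOn ℝ (⊤ : ℕ∞) Z B)
    (hU : ContDiffOn ℝ (⊤ : ℕ∞) U F) (hV : ContDiffOn ℝ (⊤ : ℕ∞) V F)
    (hW : ContDiffOn ℝ (⊤ : ℕ∞) W F) (hQ : ContDiffOn ℝ (⊤ : ℕ∞) Q F) :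
    ∀ p ∈ B, ∀ q ∈ F,
      (∀ w₁ w₂ w₃ w₄ : E₁ × E₂,
        KoszulWitness (B ×ˢ F) (warpedMetric gB gF f) (liftVecB X) (liftVecB Z) (p, q) w₁ →
        KoszulWitness (B ×ˢ F) (warpedMetric gB gF f) (liftVecB Y) (liftVecF Q) (p, q) w₂ →
        KoszulWitness (B ×ˢ F) (warpedMetric gB gF f) (liftVecB Y) (liftVecB Z) (p, q) w₃ →
        KoszulWitness (B ×ˢ F) (warpedMetric gB gF f) (liftVecB X) (liftVecF Q) (p, q) w₄ →
        riemannExpr (warpedMetric gB gF f) (liftVecB X) (liftVecB Y) (liftVecB Z)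
          (liftVecF Q) (p, q) w₁ w₂ w₃ w₄ = 0) ∧
      (∀ w₁ w₂ w₃ w₄ : E₁ × E₂,
        KoszulWitness (B ×ˢ F) (warpedMetric gB gF f) (liftVecB X) (liftVecF W) (p, q) w₁ →
        KoszulWitness (B ×ˢ F) (warpedMetric gB gF f) (liftVecB Y) (liftVecF Q) (p, q) w₂ →
        KoszulWitness (B ×ˢ F) (warpedMetric gB gF f) (liftVecB Y) (liftVecF W) (p, q) w₃ →
        KoszulWitness (B ×ˢ F) (warpedMetric gB gF f) (liftVecB X) (liftVecF Q) (p, q) w₄ →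
        riemannExpr (warpedMetric gB gF f) (liftVecB X) (liftVecB Y) (liftVecF W)
          (liftVecF Q) (p, q) w₁ w₂ w₃ w₄ = 0) ∧
      (∀ w₁ w₂ w₃ w₄ : E₁ × E₂,
        KoszulWitness (B ×ˢ F) (warpedMetric gB gF f) (liftVecF U) (liftVecB Z) (p, q) w₁ →
        KoszulWitness (B ×ˢ F) (warpedMetric gB gF f) (liftVecF V) (liftVecF Q) (p, q) w₂ →
        KoszulWitness (B ×ˢ F) (warpedMetric gB gF f) (liftVecF V) (liftVecB Z) (p, q) w₃ →
        KoszulWitness (B ×ˢ F) (warpedMetric gB gF f) (liftVecF U) (liftVecF Q) (p, q) w₄ →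
        riemannExpr (warpedMetric gB gF f) (liftVecF U) (liftVecF V) (liftVecB Z)
          (liftVecF Q) (p, q) w₁ w₂ w₃ w₄ = 0) := by
  intro p hp q hq
  exact ⟨fun _ _ _ _ => riemannExpr_liftVecB_liftVecB_liftVecB_liftVecF_eq_zero hB hF hgB hgF hf
      hX hY hZ hQ hp hq,
    fun _ _ _ _ => riemannExpr_liftVecB_liftVecB_liftVecF_liftVecF_eq_zero hB hF hgB hgF hf
      hX hY hW hQ hp hq,
    fun _ _ _ _ => riemannExpr_liftVecF_liftVecF_liftVecB_liftVecF_eq_zero hB hF hgB hgF hf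
      hZ hU hV hQ hp hq⟩

/-- For a semi-regular warped product, the mixed components
`R(X̃,Ỹ,Z̃,Q̃)`, `R(X̃,Ỹ,W̃,Q̃)` and `R(Ũ,Ṽ,Z̃,Q̃)` of the Riemann curvature vanish. -/
theorem warpedProduct_riemann_mixed_vanish
    {E₁ E₂ : Type*} [NormedAddCommGroup E₁] [NormedSpace ℝ E₁] [FiniteDimensional ℝ E₁]
    [NormedAddCommGroup E₂] [NormedSpace ℝ E₂] [FiniteDimensional ℝ E₂]
    (B : Set E₁) (F : Set E₂) (hB : IsOpen B) (hF : IsOpen F)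
    (gB : E₁ → (E₁ →L[ℝ] E₁ →L[ℝ] ℝ)) (gF : E₂ → (E₂ →L[ℝ] E₂ →L[ℝ] ℝ))
    (hgB : IsSingularMetric B gB) (hgF : IsSingularMetric F gF)
    (hsB : SemiRegular B gB) (hsF : SemiRegular F gF)
    (f : E₁ → ℝ) (hf : ContDiffOn ℝ (⊤ : ℕ∞) f B)
    (hdf : DiffInOmega1s B gB f)
    (X Y Z : E₁ → E₁) (U V W Q : E₂ → E₂)
    (hX : ContDiffOn ℝ (⊤ : ℕ∞) X B) (hY : ContDiffOn ℝ (⊤ : ℕ∞) Y B)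
    (hZ : ContDiffOn ℝ (⊤ : ℕ∞) Z B)
    (hU : ContDiffOn ℝ (⊤ : ℕ∞) U F) (hV : ContDiffOn ℝ (⊤ : ℕ∞) V F)
    (hW : ContDiffOn ℝ (⊤ : ℕ∞) W F) (hQ : ContDiffOn ℝ (⊤ : ℕ∞) Q F) :
    ∀ p ∈ B, ∀ q ∈ F,
      (∀ w₁ w₂ w₃ w₄ : E₁ × E₂,
        KoszulWitness (B ×ˢ F) (warpedMetric gB gF f) (liftVecB X) (liftVecB Z) (p, q) w₁ →
        KoszulWitness (B ×ˢ F) (warpedMetric gB gF f) (liftVecB Y) (liftVecF Q) (p, q) w₂ →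
        KoszulWitness (B ×ˢ F) (warpedMetric gB gF f) (liftVecB Y) (liftVecB Z) (p, q) w₃ →
        KoszulWitness (B ×ˢ F) (warpedMetric gB gF f) (liftVecB X) (liftVecF Q) (p, q) w₄ →
        riemannExpr (warpedMetric gB gF f) (liftVecB X) (liftVecB Y) (liftVecB Z)
          (liftVecF Q) (p, q) w₁ w₂ w₃ w₄ = 0) ∧
      (∀ w₁ w₂ w₃ w₄ : E₁ × E₂,
        KoszulWitness (B ×ˢ F) (warpedMetric gB gF f) (liftVecB X) (liftVecF W) (p, q) w₁ →
        KoszulWitness (B ×ˢ F) (warpedMetric gB gF f) (liftVecB Y) (liftVecF Q) (p, q) w₂ →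
        KoszulWitness (B ×ˢ F) (warpedMetric gB gF f) (liftVecB Y) (liftVecF W) (p, q) w₃ →
        KoszulWitness (B ×ˢ F) (warpedMetric gB gF f) (liftVecB X) (liftVecF Q) (p, q) w₄ →
        riemannExpr (warpedMetric gB gF f) (liftVecB X) (liftVecB Y) (liftVecF W)
          (liftVecF Q) (p, q) w₁ w₂ w₃ w₄ = 0) ∧
      (∀ w₁ w₂ w₃ w₄ : E₁ × E₂,
        KoszulWitness (B ×ˢ F) (warpedMetric gB gF f) (liftVecF U) (liftVecB Z) (p, q) w₁ →
        KoszulWitness (B ×ˢ F) (warpedMetric gB gF f) (liftVecF V) (liftVecF Q) (p, q) w₂ →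
        KoszulWitness (B ×ˢ F) (warpedMetric gB gF f) (liftVecF V) (liftVecB Z) (p, q) w₃ →
        KoszulWitness (B ×ˢ F) (warpedMetric gB gF f) (liftVecF U) (liftVecF Q) (p, q) w₄ →
        riemannExpr (warpedMetric gB gF f) (liftVecF U) (liftVecF V) (liftVecB Z)
          (liftVecF Q) (p, q) w₁ w₂ w₃ w₄ = 0) :=
  warpedProduct_riemann_mixed_vanish_general B F hB hF gB gF hgB hgF f hf X Y Z U V W Q hX hY hZ hU
    hV hW hQ

end
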